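/- Assume the risk functional R satisfies the lower Fatou property and positive star-shapedness. If a market X = (X¹, …, X^d) admits (U,R)-arbitrage for a utility functional U, then there exists a portfolio π ∈ ℝ^d \ {0} such that R(λ X_π) ≤ 0 for all λ > 0. -/

import Mathlib

open MeasureTheory Filter
open scoped ENNReal

namespace URPaper

variable {Ω : Type*} [MeasurableSpace Ω]

/-- The payoff `π · X` of the portfolio `π` in the market `X`. -/
def port {d : ℕ} (X : Fin d → Ω → ℝ) (π : Fin d → ℝ) : Ω → ℝ :=
  fun ω => ∑ i, π i * X i ω

/-- The scaled position `l • Y`. -/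
def scale (l : ℝ) (Y : Ω → ℝ) : Ω → ℝ := fun ω => l * Y ω

/-- A functional is increasing (with respect to the a.s. order on `L¹`). -/
def MonoInc (μ : Measure Ω) (U : (Ω → ℝ) → EReal) : Prop :=
  ∀ Y Z : Ω → ℝ, Integrable Y μ → Integrable Z μ →
    (∀ᵐ ω ∂μ, Y ω ≤ Z ω) → U Y ≤ U Z

/-- A functional is decreasing (with respect to the a.s. order on `L¹`). -/
def MonoDec (μ : Measure Ω) (R : (Ω → ℝ) → EReal) : Prop :=
  ∀ Y Z : Ω → ℝ, Integrable Y μ → Integrable Z μ →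
    (∀ᵐ ω ∂μ, Y ω ≤ Z ω) → R Z ≤ R Y

/-- `U(∞)`: the limit of `U` along deterministic constants `y → ∞`
(equal to the supremum, since `U` is increasing along constants). -/
noncomputable def limConst (U : (Ω → ℝ) → EReal) : EReal := ⨆ y : ℝ, U (fun _ => y)

/-- A utility functional: increasing, normalized, `[-∞,∞)`-valued,
and satisfying `U(Y) < U(∞)` for all `Y ∈ L¹`. -/
structure IsUtility (μ : Measure Ω) (U : (Ω → ℝ) → EReal) : Prop where
  mono : MonoInc μ U
  norm : U (fun _ => (0 : ℝ)) = 0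
  ne_top : ∀ Y : Ω → ℝ, Integrable Y μ → U Y ≠ ⊤
  non_sat : ∀ Y : Ω → ℝ, Integrable Y μ → U Y < limConst U

/-- A risk functional: decreasing, normalized, `(-∞,∞]`-valued. -/
structure IsRisk (μ : Measure Ω) (R : (Ω → ℝ) → EReal) : Prop where
  mono : MonoDec μ R
  norm : R (fun _ => (0 : ℝ)) = 0
  ne_bot : ∀ Y : Ω → ℝ, Integrable Y μ → R Y ≠ ⊥

/-- Positive star-shapedness: `R(λY) ≥ λ R(Y)` for `λ > 1`. -/
def PosStarShaped (μ : Measure Ω) (R : (Ω → ℝ) → EReal) : Prop :=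
  ∀ Y : Ω → ℝ, Integrable Y μ → ∀ l : ℝ, 1 < l → (l : EReal) * R Y ≤ R (scale l Y)

/-- The lower Fatou property. -/
def LowerFatou (μ : Measure Ω) (R : (Ω → ℝ) → EReal) : Prop :=
  ∀ (Yn : ℕ → Ω → ℝ) (Y Z : Ω → ℝ), (∀ n, Integrable (Yn n) μ) →
    Integrable Y μ → Integrable Z μ →
    (∀ᵐ ω ∂μ, Tendsto (fun n => Yn n ω) atTop (nhds (Y ω))) →
    (∀ n, ∀ᵐ ω ∂μ, |Yn n ω| ≤ Z ω) →
    R Y ≤ Filter.liminf (fun n => R (Yn n)) atTop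

/-- The upper Fatou property. -/
def UpperFatou (μ : Measure Ω) (U : (Ω → ℝ) → EReal) : Prop :=
  ∀ (Yn : ℕ → Ω → ℝ) (Y Z : Ω → ℝ), (∀ n, Integrable (Yn n) μ) →
    Integrable Y μ → Integrable Z μ →
    (∀ᵐ ω ∂μ, Tendsto (fun n => Yn n ω) atTop (nhds (Y ω))) →
    (∀ n, ∀ᵐ ω ∂μ, |Yn n ω| ≤ Z ω) →
    Filter.limsup (fun n => U (Yn n)) atTop ≤ U Y

/-- Sensitivity to large losses for a risk functional. -/
def SensLLRisk (μ : Measure Ω) (R : (Ω → ℝ) → EReal) : Prop :=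
  ∀ Y : Ω → ℝ, Integrable Y μ → 0 < μ {ω | Y ω < 0} →
    ∃ l₀ : ℝ, 0 < l₀ ∧ ∀ l : ℝ, l₀ < l → 0 < R (scale l Y)

/-- Sensitivity to large losses for a utility functional. -/
def SensLLUtility (μ : Measure Ω) (U : (Ω → ℝ) → EReal) : Prop :=
  ∀ Y : Ω → ℝ, Integrable Y μ → 0 < μ {ω | Y ω < 0} →
    ∃ l₀ : ℝ, 0 < l₀ ∧ ∀ l : ℝ, l₀ < l → U (scale l Y) < 0

/-- Weak sensitivity to large losses for a utility functional. -/
def WeakSensLLUtility (μ : Measure Ω) (U : (Ω → ℝ) → EReal) : Prop :=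
  ∀ Y : Ω → ℝ, Integrable Y μ → 0 < μ {ω | Y ω < 0} →
    Filter.limsup (fun l : ℝ => U (scale l Y)) atTop < limConst U

/-- Sensitivity equivalence for a utility functional. -/
def SensEquivUtility (μ : Measure Ω) (U : (Ω → ℝ) → EReal) : Prop :=
  WeakSensLLUtility μ U ↔ SensLLUtility μ U

/-- Law-invariance of a functional on `L¹`. -/
def LawInvariant (μ : Measure Ω) (H : (Ω → ℝ) → EReal) : Prop :=
  ∀ Y Z : Ω → ℝ, Integrable Y μ → Integrable Z μ →
    ProbabilityTheory.IdentDistrib Y Z μ μ → H Y = H Z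

/-- Cash-additivity: `H(Y + c) = H(Y) + H(c)` for constants `c`. -/
def CashAdditive (μ : Measure Ω) (H : (Ω → ℝ) → EReal) : Prop :=
  ∀ Y : Ω → ℝ, Integrable Y μ → ∀ c : ℝ,
    H (fun ω => Y ω + c) = H Y + H (fun _ => c)

/-- Cash-convexity of a risk functional. -/
def CashConvex (μ : Measure Ω) (R : (Ω → ℝ) → EReal) : Prop :=
  ∀ Y : Ω → ℝ, Integrable Y μ → ∀ c l : ℝ, 0 < l → l < 1 →
    R (fun ω => l * Y ω + (1 - l) * c) ≤
      (l : EReal) * R Y + ((1 - l : ℝ) : EReal) * R (fun _ => c)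

/-- Cash-concavity of a utility functional. -/
def CashConcave (μ : Measure Ω) (U : (Ω → ℝ) → EReal) : Prop :=
  ∀ Y : Ω → ℝ, Integrable Y μ → ∀ c l : ℝ, 0 < l → l < 1 →
    (l : EReal) * U Y + ((1 - l : ℝ) : EReal) * U (fun _ => c) ≤
      U (fun ω => l * Y ω + (1 - l) * c)

/-- Strict quasi-concavity of a utility functional. -/
def StrictQuasiConcave (μ : Measure Ω) (U : (Ω → ℝ) → EReal) : Prop :=
  ∀ Y Z : Ω → ℝ, Integrable Y μ → Integrable Z μ → 0 < μ {ω | Y ω ≠ Z ω} →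
    ∀ l : ℝ, 0 < l → l < 1 →
      min (U Y) (U Z) < U (fun ω => l * Y ω + (1 - l) * Z ω)

/-- Quasi-convexity of a risk functional. -/
def QuasiConvex (μ : Measure Ω) (R : (Ω → ℝ) → EReal) : Prop :=
  ∀ Y Z : Ω → ℝ, Integrable Y μ → Integrable Z μ → ∀ l : ℝ, 0 < l → l < 1 →
    R (fun ω => l * Y ω + (1 - l) * Z ω) ≤ max (R Y) (R Z)

/-- An atomless measure. -/
def Atomless (μ : Measure Ω) : Prop :=
  ∀ s : Set Ω, MeasurableSet s → μ s ≠ 0 →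
    ∃ t : Set Ω, t ⊆ s ∧ MeasurableSet t ∧ 0 < μ t ∧ μ t < μ s

/-- A market: a finite tuple of integrable payoffs, non-redundant
(linearly independent in `L¹`) and arbitrage-free. -/
structure IsMarket (μ : Measure Ω) {d : ℕ} (X : Fin d → Ω → ℝ) : Prop where
  integrable : ∀ i, Integrable (X i) μ
  nonredundant : ∀ π : Fin d → ℝ, (∀ᵐ ω ∂μ, port X π ω = 0) → π = 0
  no_arbitrage : ¬∃ π : Fin d → ℝ,
      (∀ᵐ ω ∂μ, 0 ≤ port X π ω) ∧ 0 < μ {ω | 0 < port X π ω}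

/-- `(U,R)`-portfolio selection is weakly well posed for the market `X`. -/
def WeaklyWellPosedFor (U R : (Ω → ℝ) → EReal) {d : ℕ} (X : Fin d → Ω → ℝ) : Prop :=
  ∀ Rmax : ℝ, 0 ≤ Rmax →
    (⨆ π : {π : Fin d → ℝ // R (port X π) ≤ (Rmax : EReal)}, U (port X π.1)) < limConst U

/-- `(U,R)`-portfolio selection is well posed for the market `X`:
the supremum is attained by some portfolio. -/
def WellPosedFor (U R : (Ω → ℝ) → EReal) {d : ℕ} (X : Fin d → Ω → ℝ) : Prop :=
  ∀ Rmax : ℝ, 0 ≤ Rmax →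
    ∃ πs : Fin d → ℝ, R (port X πs) ≤ (Rmax : EReal) ∧
      ∀ π : Fin d → ℝ, R (port X π) ≤ (Rmax : EReal) → U (port X π) ≤ U (port X πs)

/-- Market-independent weak well-posedness. -/
def MIWeaklyWellPosed (μ : Measure Ω) (U R : (Ω → ℝ) → EReal) : Prop :=
  ∀ (d : ℕ), 0 < d → ∀ X : Fin d → Ω → ℝ, IsMarket μ X → WeaklyWellPosedFor U R X

/-- Market-independent well-posedness. -/
def MIWellPosed (μ : Measure Ω) (U R : (Ω → ℝ) → EReal) : Prop :=
  ∀ (d : ℕ), 0 < d → ∀ X : Fin d → Ω → ℝ, IsMarket μ X → WellPosedFor U R X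

/-- The market `X` admits `(U,R)`-arbitrage. -/
def URArbitrage (U R : (Ω → ℝ) → EReal) {d : ℕ} (X : Fin d → Ω → ℝ) : Prop :=
  ∃ (π : ℕ → Fin d → ℝ) (Rt : ℝ), 0 ≤ Rt ∧
    Tendsto (fun n => U (port X (π n))) atTop (nhds (limConst U)) ∧
    ∀ n, R (port X (π n)) ≤ (Rt : EReal)

/-- The terminal payoff `θ · S̄₁` of a portfolio `θ` in a normalized market model
with interest rate `r` and risky payoffs `S`. -/
def mmPayoff {d : ℕ} (r : ℝ) (S : Fin d → Ω → ℝ) (θ : Fin (d + 1) → ℝ) : Ω → ℝ :=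
  fun ω => θ 0 * (1 + r) + ∑ i : Fin d, θ i.succ * S i ω

/-- A normalized, arbitrage-free and non-redundant market model with `d` risky assets:
all initial prices are `1`, asset `0` is riskless with payoff `1 + r`. -/
structure MarketModel (μ : Measure Ω) (d : ℕ) where
  r : ℝ
  hr : -1 < r
  S : Fin d → Ω → ℝ
  integrable : ∀ i, Integrable (S i) μ
  nonredundant : ∀ θ : Fin (d + 1) → ℝ, (∀ᵐ ω ∂μ, mmPayoff r S θ ω = 0) → θ = 0
  no_arbitrage : ¬∃ θ : Fin (d + 1) → ℝ, (∑ j, θ j) ≤ 0 ∧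
    (∀ᵐ ω ∂μ, 0 ≤ mmPayoff r S θ ω) ∧ 0 < μ {ω | 0 < mmPayoff r S θ ω}

/-- The terminal payoff `θ · S̄₁`. -/
def payoff {μ : Measure Ω} {d : ℕ} (M : MarketModel μ d) (θ : Fin (d + 1) → ℝ) : Ω → ℝ :=
  mmPayoff M.r M.S θ

/-- The initial cost `θ · S̄₀` (all initial prices are normalized to `1`). -/
def cost {μ : Measure Ω} {d : ℕ} (_M : MarketModel μ d) (θ : Fin (d + 1) → ℝ) : ℝ :=
  ∑ j, θ j

/-- The positive part of an extended real number, as an element of `ℝ≥0∞`. -/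
noncomputable def posPart (x : EReal) : ℝ≥0∞ :=
  if x = ⊤ then ⊤ else ENNReal.ofReal x.toReal

/-- The expected utility `E[u(Y)]` of a position `Y`, as an extended real number. -/
noncomputable def expEU (μ : Measure Ω) (u : ℝ → EReal) (Y : Ω → ℝ) : EReal :=
  ((∫⁻ ω, posPart (u (Y ω)) ∂μ : ℝ≥0∞) : EReal) -
    ((∫⁻ ω, posPart (-(u (Y ω))) ∂μ : ℝ≥0∞) : EReal)

/-- A utility function: increasing, normalized, `[-∞,∞)`-valued, non-satiated
(`u(∞) > u(z)` for all `z`), and of at most linear growth at `+∞`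
(`limsup_{y→∞} u(y)/y < ∞`). -/
structure IsUtilityFun (u : ℝ → EReal) : Prop where
  mono : Monotone u
  norm : u 0 = 0
  ne_top : ∀ y : ℝ, u y ≠ ⊤
  non_sat : ∀ z : ℝ, u z < ⨆ y : ℝ, u y
  growth : ∃ a : ℝ, ∀ᶠ y in (atTop : Filter ℝ), u y ≤ ((a * y : ℝ) : EReal)

/-- `u` is unbounded (its range is not contained in any bounded interval of `ℝ`). -/
def UnboundedFun (u : ℝ → EReal) : Prop :=
  ¬∃ C : ℝ, ∀ y : ℝ, ((-C : ℝ) : EReal) ≤ u y ∧ u y ≤ ((C : ℝ) : EReal)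

/-- `u` is negatively star-shaped on `ℝ₊`: `u(λy) ≤ λ u(y)` for `y ≥ 0`, `λ ≥ 1`. -/
def NegStarShapedPos (u : ℝ → EReal) : Prop :=
  ∀ y : ℝ, 0 ≤ y → ∀ l : ℝ, 1 ≤ l → u (l * y) ≤ (l : EReal) * u y

/-- The asymptotic loss-gain ratio `ALG(u) = limsup_{y→∞} u(-y)/u(y)`. -/
noncomputable def ALG (u : ℝ → EReal) : EReal :=
  Filter.limsup (fun y : ℝ => u (-y) / u y) atTop

/-- Strict concavity of a `[-∞,∞)`-valued utility function. -/
def StrictConcaveFun (u : ℝ → EReal) : Prop :=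
  ∀ y z : ℝ, y ≠ z → ∀ l : ℝ, 0 < l → l < 1 →
    (l : EReal) * u y + ((1 - l : ℝ) : EReal) * u z < u (l * y + (1 - l) * z)



section Aux

variable {Ω : Type*} [MeasurableSpace Ω] {μ : Measure Ω}

lemma port_integrable {d : ℕ} {X : Fin d → Ω → ℝ} (hX : ∀ i, Integrable (X i) μ)
    (π : Fin d → ℝ) : Integrable (port X π) μ := by
  show Integrable (fun ω => ∑ i, π i * X i ω) μ
  simpa [port] using integrable_finset_sum Finset.univ (fun i _ => (hX i).const_mul (π i))

lemma port_smul {d : ℕ} (X : Fin d → Ω → ℝ) (c : ℝ) (π : Fin d → ℝ) :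
    port X (c • π) = scale c (port X π) := by
  funext ω; simp [port, scale, Finset.mul_sum, mul_assoc]

lemma abs_port_le {d : ℕ} (X : Fin d → Ω → ℝ) (π : Fin d → ℝ) (ω : Ω) :
    |port X π ω| ≤ ‖π‖ * ∑ i, |X i ω| :=
  calc |port X π ω| ≤ ∑ i, |π i * X i ω| := Finset.abs_sum_le_sum_abs _ _
    _ ≤ ∑ i, ‖π‖ * |X i ω| := Finset.sum_le_sum fun i _ => by
        rw [abs_mul]
        exact mul_le_mul_of_nonneg_right (norm_le_pi_norm π i) (abs_nonneg _)
    _ = ‖π‖ * ∑ i, |X i ω| := (Finset.mul_sum _ _ _).symm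

end Aux

/-- if `R` has the lower Fatou property and is positively star-shaped and
the market `X` admits `(U,R)`-arbitrage, then some nonzero portfolio has
nonpositive risk under arbitrary scaling. -/
theorem stmt5 {Ω : Type*} [MeasurableSpace Ω] (μ : Measure Ω) [IsProbabilityMeasure μ]
    (U R : (Ω → ℝ) → EReal) (hU : IsUtility μ U) (hR : IsRisk μ R)
    (hlf : LowerFatou μ R) (hps : PosStarShaped μ R)
    {d : ℕ} (hd : 0 < d) (X : Fin d → Ω → ℝ) (hX : IsMarket μ X)
    (harb : URArbitrage U R X) :
    ∃ p : Fin d → ℝ, p ≠ 0 ∧ ∀ l : ℝ, 0 < l → R (scale l (port X p)) ≤ 0 := by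

  obtain ⟨π, Rt, hRt0, hUlim, hRle⟩ := harb
  have hint : ∀ ρ : Fin d → ℝ, Integrable (port X ρ) μ := port_integrable hX.integrable
  have hZint : Integrable (fun ω => ∑ i, |X i ω|) μ :=
    integrable_finset_sum _ (fun i _ => (hX.integrable i).abs)
  -- the portfolios are unbounded in norm
  have hub : ∀ C : ℝ, ∃ n, C < ‖π n‖ := by
    by_contra h
    push_neg at h
    obtain ⟨C, hC⟩ := h
    set C' := max C 0 with hC'
    set Z : Ω → ℝ := fun ω => C' * ∑ i, |X i ω| with hZ
    have hZi : Integrable Z μ := hZint.const_mul _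
    have hle : ∀ n, U (port X (π n)) ≤ U Z := fun n =>
      hU.mono _ _ (hint _) hZi (Filter.Eventually.of_forall fun ω => by
        calc port X (π n) ω ≤ |port X (π n) ω| := le_abs_self _
          _ ≤ ‖π n‖ * ∑ i, |X i ω| := abs_port_le X _ ω
          _ ≤ C' * ∑ i, |X i ω| := mul_le_mul_of_nonneg_right
              ((hC n).trans (le_max_left _ _))
              (Finset.sum_nonneg fun i _ => abs_nonneg _))
    have hfin := le_of_tendsto hUlim (Filter.Eventually.of_forall hle)
    exact absurd hfin (not_le.mpr (hU.non_sat Z hZi))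
  choose nk hnk using fun k : ℕ => hub k
  set m : ℕ → ℝ := fun k => ‖π (nk k)‖ with hm
  have hmk : ∀ k : ℕ, (k : ℝ) < m k := hnk
  have hmpos : ∀ k, 0 < m k := fun k => lt_of_le_of_lt (Nat.cast_nonneg k) (hmk k)
  set q : ℕ → Fin d → ℝ := fun k => (m k)⁻¹ • π (nk k) with hq
  have hqnorm : ∀ k, ‖q k‖ = 1 := fun k => by
    rw [hq]
    simp [norm_smul, abs_of_pos (inv_pos.mpr (hmpos k)), hm,
      inv_mul_cancel₀ (hmpos k).ne']
    exact inv_mul_cancel₀ (hmpos k).ne'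
  obtain ⟨p, hpmem, φ, hφ, hqp⟩ :=
    (isCompact_sphere (0 : Fin d → ℝ) 1).tendsto_subseq
      (fun k => mem_sphere_zero_iff_norm.mpr (hqnorm k))
  have hpnorm : ‖p‖ = 1 := mem_sphere_zero_iff_norm.mp hpmem
  have hp0 : p ≠ 0 := fun h => by simp [h] at hpnorm
  refine ⟨p, hp0, fun l hl => ?_⟩
  -- m (φ k) tends to infinity
  have hmφ : Tendsto (fun k => m (φ k)) atTop atTop := by
    apply tendsto_atTop_mono (fun k => ?_) tendsto_natCast_atTop_atTop
    exact le_trans (Nat.cast_le.mpr hφ.le_apply) (hmk (φ k)).le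
  -- pointwise convergence
  have hconv : ∀ ω, Tendsto (fun k => scale l (port X (q (φ k))) ω) atTop
      (nhds (scale l (port X p) ω)) := by
    intro ω
    have hcoord : ∀ i, Tendsto (fun k => q (φ k) i) atTop (nhds (p i)) := fun i =>
      ((continuous_apply i).tendsto p).comp hqp
    simp only [scale, port]
    exact (tendsto_finset_sum _ (fun i _ => (hcoord i).mul_const (X i ω))).const_mul l
  -- domination
  have hdom : ∀ k ω, |scale l (port X (q (φ k))) ω| ≤ l * ∑ i, |X i ω| := by
    intro k ω
    simp only [scale, abs_mul, abs_of_pos hl]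
    exact mul_le_mul_of_nonneg_left
      (by simpa [hqnorm (φ k)] using abs_port_le X (q (φ k)) ω) hl.le
  have hYint : ∀ ρ : Fin d → ℝ, Integrable (scale l (port X ρ)) μ := fun ρ => by
    show Integrable (fun ω => l * port X ρ ω) μ
    simpa [scale] using (hint ρ).const_mul l
  have hfat := hlf (fun k => scale l (port X (q (φ k)))) (scale l (port X p))
    (fun ω => l * ∑ i, |X i ω|)
    (fun k => hYint _) (hYint p) (hZint.const_mul l)
    (Filter.Eventually.of_forall hconv)
    (fun k => Filter.Eventually.of_forall (hdom k))
  -- eventual bound on the risks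
  have hRbound : ∀ᶠ k in atTop,
      R (scale l (port X (q (φ k)))) ≤ ((l * Rt / m (φ k) : ℝ) : EReal) := by
    filter_upwards [eventually_gt_atTop ⌈l⌉₊] with k hk
    have hml : l < m (φ k) := by
      have h1 : (⌈l⌉₊ : ℝ) < (k : ℝ) := Nat.cast_lt.mpr hk
      have h2 : (k : ℝ) ≤ (φ k : ℝ) := Nat.cast_le.mpr hφ.le_apply
      exact lt_of_le_of_lt (Nat.le_ceil l) (lt_of_lt_of_le h1 (h2.trans (hmk (φ k)).le))
    set c : ℝ := m (φ k) / l with hc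
    have hc1 : 1 < c := (one_lt_div hl).mpr hml
    have hc0 : 0 < c := lt_trans one_pos hc1
    have hscale : scale c (scale l (port X (q (φ k)))) = port X (π (nk (φ k))) := by
      have hps' := port_smul X (m (φ k))⁻¹ (π (nk (φ k)))
      funext ω
      have := congrFun hps' ω
      rw [hq]
      simp only [scale] at this ⊢
      rw [this, hc]
      field_simp [hl.ne', (hmpos (φ k)).ne']
    have hstar := hps _ (hYint (q (φ k))) c hc1
    rw [hscale] at hstar
    have hkey : (c : EReal) * R (scale l (port X (q (φ k)))) ≤ (Rt : EReal) :=
      hstar.trans (hRle (nk (φ k)))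
    have hnb : R (scale l (port X (q (φ k)))) ≠ ⊥ := hR.ne_bot _ (hYint _)
    by_cases ht : R (scale l (port X (q (φ k)))) = ⊤
    · rw [ht, EReal.mul_top_of_pos (by exact_mod_cast hc0)] at hkey
      exact absurd hkey (EReal.coe_lt_top Rt).not_ge
    · have hcoe : R (scale l (port X (q (φ k)))) =
          ((R (scale l (port X (q (φ k))))).toReal : EReal) :=
        (EReal.coe_toReal ht hnb).symm
      rw [hcoe] at hkey ⊢
      rw [← EReal.coe_mul, EReal.coe_le_coe_iff] at hkey
      rw [EReal.coe_le_coe_iff]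
      have : (R (scale l (port X (q (φ k))))).toReal ≤ Rt / c := by
        rw [le_div_iff₀ hc0]
        linarith [hkey]
      calc (R (scale l (port X (q (φ k))))).toReal ≤ Rt / c := this
        _ = l * Rt / m (φ k) := by rw [hc]; field_simp
  -- the bound tends to 0
  have hc0lim : Tendsto (fun k => ((l * Rt / m (φ k) : ℝ) : EReal)) atTop (nhds 0) := by
    have : Tendsto (fun k => (l * Rt / m (φ k) : ℝ)) atTop (nhds 0) :=
      Tendsto.div_atTop tendsto_const_nhds hmφ
    simpa using EReal.tendsto_coe.mpr this
  have hlim : Filter.liminf (fun k => R (scale l (port X (q (φ k))))) atTop ≤ 0 :=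
    calc Filter.liminf (fun k => R (scale l (port X (q (φ k))))) atTop
        ≤ Filter.liminf (fun k => ((l * Rt / m (φ k) : ℝ) : EReal)) atTop :=
          liminf_le_liminf hRbound
      _ = 0 := hc0lim.liminf_eq
  exact hfat.trans hlim


end URPaper
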